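/- arXiv:2004.14110 — 3 statements merged into one kernel-verified Lean document; each statement's English description precedes it below -/
import Mathlib

section
/- With p, S, and the exponential detection law as in Koopman's allocation problem, the function α ↦ ∫_S max(ln p(x) - α, 0) dx is continuous, non-increasing, tends to 0 as α → ∞, and is strictly decreasing on the set where it is positive; hence for every budget B > 0 (with B ≤ ∫_S max(ln p, -α₀) achievable) there exists α satisfying ∫_S max(ln p - α, 0) dx = B, provided {x : p(x) > 0} has positive measure. -/
open MeasureTheory Real Set Filter

section PositivePartIntegral

variable {S : Type*} [MeasurableSpace S] {μ : Measure S} {f : S → ℝ}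

theorem antitone_integral_max_sub_zero
    (hf : ∀ α : ℝ, Integrable (fun x => max (f x - α) 0) μ) :
    Antitone fun α => ∫ x, max (f x - α) 0 ∂μ := fun _ _ hαβ =>
  integral_mono (hf _) (hf _) fun _ => max_le_max (by linarith) le_rfl

/-- For `α` near `α₀` the integrand is dominated by its value at `α₀ - 1`. -/
theorem continuous_integral_max_sub_zero
    (hf : ∀ α : ℝ, Integrable (fun x => max (f x - α) 0) μ) :
    Continuous fun α => ∫ x, max (f x - α) 0 ∂μ := by
  refine continuous_iff_continuousAt.mpr fun α₀ => ?_
  refine continuousAt_of_dominated (bound := fun x => max (f x - (α₀ - 1)) 0)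
    (Eventually.of_forall fun α => (hf α).aestronglyMeasurable) ?_ (hf (α₀ - 1))
    (ae_of_all _ fun x => by fun_prop)
  filter_upwards [Ioi_mem_nhds (sub_one_lt α₀)] with α hα
  refine ae_of_all _ fun x => ?_
  rw [Real.norm_of_nonneg (le_max_right _ _)]
  exact max_le_max (by linarith [hα.out]) le_rfl

theorem tendsto_integral_max_sub_zero_atTop
    (hf : ∀ α : ℝ, Integrable (fun x => max (f x - α) 0) μ) :
    Tendsto (fun α => ∫ x, max (f x - α) 0 ∂μ) atTop (nhds 0) := by
  have hlim := tendsto_integral_filter_of_dominated_convergence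
    (fun x => max (f x - 0) 0) (Eventually.of_forall fun α => (hf α).aestronglyMeasurable)
    (by
      filter_upwards [eventually_ge_atTop (0 : ℝ)] with α hα
      refine ae_of_all _ fun x => ?_
      rw [Real.norm_of_nonneg (le_max_right _ _)]
      exact max_le_max (by linarith) le_rfl)
    (hf 0)
    (ae_of_all μ fun x => tendsto_const_nhds.congr' <| by
      filter_upwards [eventually_ge_atTop (f x)] with α hα
      exact (max_eq_right (by linarith)).symm)
  rwa [integral_zero] at hlim

/-- Where `x ↦ max (f x - β) 0` does not vanish, lowering `β` to `α` raises it by `β - α > 0`,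
so a positive integral at `β` forces a strictly larger one at `α`. -/
theorem strictAntiOn_integral_max_sub_zero
    (hf : ∀ α : ℝ, Integrable (fun x => max (f x - α) 0) μ) :
    StrictAntiOn (fun α => ∫ x, max (f x - α) 0 ∂μ) {α | 0 < ∫ x, max (f x - α) 0 ∂μ} := by
  intro α _ β hβ hαβ
  have hsupp_β : 0 < μ (Function.support fun x => max (f x - β) 0) :=
    (integral_pos_iff_support_of_nonneg (fun _ => le_max_right _ _) (hf β)).mp hβ
  have hsupp_sub : (Function.support fun x => max (f x - β) 0) ⊆
      Function.support fun x => max (f x - α) 0 - max (f x - β) 0 := by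
    intro x hx
    have hfx : β < f x := by
      by_contra! hle
      exact hx (max_eq_right (by linarith))
    simp only [Function.mem_support, max_eq_left (by linarith : 0 ≤ f x - α),
      max_eq_left (by linarith : 0 ≤ f x - β)]
    linarith
  have hdiff : 0 < ∫ x, (max (f x - α) 0 - max (f x - β) 0) ∂μ :=
    (integral_pos_iff_support_of_nonneg
      (fun x => sub_nonneg.mpr (max_le_max (by linarith) le_rfl)) ((hf α).sub (hf β))).mpr
      (hsupp_β.trans_le (measure_mono hsupp_sub))
  rw [integral_sub (hf α) (hf β)] at hdiff
  exact sub_pos.mp hdiff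

end PositivePartIntegral

theorem koopman_budget_function_general {S : Type*} [MeasurableSpace S]
    (μ : Measure S)
    (p : S → ℝ)
    (G : ℝ → ℝ) (hG : ∀ α, G α = ∫ x, max (Real.log (p x) - α) 0 ∂μ)
    (hG_int : ∀ α : ℝ, Integrable (fun x => max (Real.log (p x) - α) 0) μ) :
    Continuous G ∧
    Antitone G ∧
    Filter.Tendsto G Filter.atTop (nhds 0) ∧
    StrictAntiOn G {α | 0 < G α} ∧
    ∀ B : ℝ, 0 < B → (∃ α₀ : ℝ, B ≤ G α₀) → ∃ α : ℝ, G α = B := by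
  obtain rfl : G = fun α => ∫ x, max (Real.log (p x) - α) 0 ∂μ := funext hG
  have hcont := continuous_integral_max_sub_zero hG_int
  have hlim := tendsto_integral_max_sub_zero_atTop hG_int
  refine ⟨hcont, antitone_integral_max_sub_zero hG_int, hlim,
    strictAntiOn_integral_max_sub_zero hG_int, fun B hB ⟨α₀, hα₀⟩ => ?_⟩
  obtain ⟨α, -, hα⟩ := isPreconnected_Ici.intermediate_value_Ioc self_mem_Ici
    (le_principal_iff.mpr (Ici_mem_atTop α₀)) hcont.continuousOn hlim ⟨hB, hα₀⟩
  exact ⟨α, hα⟩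

/-- Properties of the budget function `G(α) = ∫ max (ln p - α) 0` determining
the Lagrange multiplier in Koopman's optimal coverage: `G` is continuous,
non-increasing, tends to `0` as `α → ∞`, is strictly decreasing where positive,
and every achievable budget `B > 0` is attained by some `α`, provided the set
where `p > 0` has positive measure. -/
theorem koopman_budget_function {S : Type*} [MeasurableSpace S]
    (μ : Measure S) [IsFiniteMeasure μ]
    (p : S → ℝ) (hp_meas : Measurable p) (hp_nonneg : ∀ x, 0 ≤ p x)
    (hp_prob : ∫ x, p x ∂μ = 1)
    (hp_pos : 0 < μ {x | 0 < p x})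
    (G : ℝ → ℝ) (hG : ∀ α, G α = ∫ x, max (Real.log (p x) - α) 0 ∂μ)
    (hG_int : ∀ α : ℝ, Integrable (fun x => max (Real.log (p x) - α) 0) μ) :
    Continuous G ∧
    Antitone G ∧
    Filter.Tendsto G Filter.atTop (nhds 0) ∧
    StrictAntiOn G {α | 0 < G α} ∧
    ∀ B : ℝ, 0 < B → (∃ α₀ : ℝ, B ≤ G α₀) → ∃ α : ℝ, G α = B :=
  koopman_budget_function_general μ p G hG hG_int
end

section
/- Koopman's optimal allocation is consistent under incremental planning: if c₁ = max(ln p - α₁, 0) is the optimal coverage for budget B₁, and one then optimally allocates an additional budget B₂ against the posterior density proportional to p·e^{-c₁}, the resulting total coverage equals max(ln p - α, 0) where α corresponds to total budget B₁ + B₂; in particular the total detection probability equals that achieved by allocating B₁ + B₂ from the start. -/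
open MeasureTheory Real Set

/-- Consistency of Koopman's optimal allocation under incremental planning:
if `c₁ = max (ln p - α₁) 0` is the optimal coverage for budget `B₁`, and one
then optimally allocates an additional budget `B₂` against the posterior
density `q = p · e^{-c₁}` (giving `c₂ = max (ln q - α₂) 0`), the total coverage
`c₁ + c₂` equals `max (ln p - α) 0` for an `α` whose budget is `B₁ + B₂`, and
the total detection probability equals that of allocating `B₁ + B₂` from the
start. -/
theorem koopman_incremental_planning {S : Type*} [MeasurableSpace S]
    (μ : Measure S) [IsFiniteMeasure μ]
    (p : S → ℝ) (hp_meas : Measurable p) (hp_pos : ∀ x, 0 < p x)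
    (hp_prob : ∫ x, p x ∂μ = 1)
    (B₁ B₂ : ℝ) (hB₁ : 0 < B₁) (hB₂ : 0 < B₂)
    (α₁ : ℝ) (c₁ : S → ℝ) (hc₁ : ∀ x, c₁ x = max (Real.log (p x) - α₁) 0)
    (hc₁_int : Integrable c₁ μ) (hc₁_budget : ∫ x, c₁ x ∂μ = B₁)
    (q : S → ℝ) (hq : ∀ x, q x = p x * Real.exp (-c₁ x))
    (α₂ : ℝ) (c₂ : S → ℝ) (hc₂ : ∀ x, c₂ x = max (Real.log (q x) - α₂) 0)
    (hc₂_int : Integrable c₂ μ) (hc₂_budget : ∫ x, c₂ x ∂μ = B₂) :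
    ∃ α : ℝ,
      (∀ x, c₁ x + c₂ x = max (Real.log (p x) - α) 0) ∧
      ∫ x, max (Real.log (p x) - α) 0 ∂μ = B₁ + B₂ ∧
      ∫ x, p x * (1 - Real.exp (-(c₁ x + c₂ x))) ∂μ =
        ∫ x, p x * (1 - Real.exp (-(max (Real.log (p x) - α) 0))) ∂μ := by
  refine ⟨min α₁ α₂, ?_, ?_, ?_⟩
  case _ =>
    intro x
    have hlq : Real.log (q x) = Real.log (p x) - c₁ x := by
      rw [hq x, Real.log_mul (hp_pos x).ne' (Real.exp_pos _).ne', Real.log_exp]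
      ring
    rw [hc₂ x, hlq, hc₁ x]
    rcases le_total (Real.log (p x)) α₁ with h | h <;>
      rcases le_total α₁ α₂ with h2 | h2 <;>
      simp only [max_def, min_def] <;> split_ifs <;> linarith
  case _ =>
    have hkey : ∀ x, c₁ x + c₂ x = max (Real.log (p x) - min α₁ α₂) 0 := by
      intro x
      have hlq : Real.log (q x) = Real.log (p x) - c₁ x := by
        rw [hq x, Real.log_mul (hp_pos x).ne' (Real.exp_pos _).ne', Real.log_exp]
        ring
      rw [hc₂ x, hlq, hc₁ x]
      rcases le_total (Real.log (p x)) α₁ with h | h <;>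
        rcases le_total α₁ α₂ with h2 | h2 <;>
        simp only [max_def, min_def] <;> split_ifs <;> linarith
    have : ∫ x, max (Real.log (p x) - min α₁ α₂) 0 ∂μ = ∫ x, (c₁ x + c₂ x) ∂μ :=
      integral_congr_ae (Filter.Eventually.of_forall fun x => (hkey x).symm)
    rw [this, integral_add hc₁_int hc₂_int, hc₁_budget, hc₂_budget]
  case _ =>
    apply integral_congr_ae
    apply Filter.Eventually.of_forall
    intro x
    have hlq : Real.log (q x) = Real.log (p x) - c₁ x := by
      rw [hq x, Real.log_mul (hp_pos x).ne' (Real.exp_pos _).ne', Real.log_exp]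
      ring
    have hkey : c₁ x + c₂ x = max (Real.log (p x) - min α₁ α₂) 0 := by
      rw [hc₂ x, hlq, hc₁ x]
      rcases le_total (Real.log (p x)) α₁ with h | h <;>
        rcases le_total α₁ α₂ with h2 | h2 <;>
        simp only [max_def, min_def] <;> split_ifs <;> linarith
    simp only [hkey]
end

section
/- Let c be any feasible coverage with ∫_S c = B and c_opt = max(ln p - α, 0) with ∫_S c_opt = B, for a density p > 0 on S. Then the difference in detection probabilities satisfies ∫_S p(1 - e^{-c_opt}) - ∫_S p(1 - e^{-c}) = ∫_S p(e^{-c} - e^{-c_opt}) ≥ 0, with equality iff c = c_opt almost everywhere on {p > 0}. -/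
open MeasureTheory Real Set

lemma koopman_key (α p t s : ℝ) (hp : 0 < p) (ht : 0 ≤ t)
    (hs : s = max (Real.log p - α) 0) :
    0 ≤ p * (exp (-t) - exp (-s)) + exp α * (t - s) ∧
    (p * (exp (-t) - exp (-s)) + exp α * (t - s) = 0 → t = s) := by
  have hq : 0 < p * exp (-s) := by positivity
  have hqeq : 0 < s → p * exp (-s) = exp α := by
    intro hs0
    have hlt : 0 < Real.log p - α := by
      by_contra h
      rw [hs, max_eq_right (not_lt.mp h)] at hs0; exact lt_irrefl 0 hs0
    have hse : s = Real.log p - α := by rw [hs, max_eq_left hlt.le]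
    rw [hse, neg_sub, exp_sub, exp_log hp]
    field_simp
  have hqle : p * exp (-s) ≤ exp α := by
    rcases le_or_gt (Real.log p - α) 0 with h | h
    · have hs0 : s = 0 := by rw [hs, max_eq_right h]
      rw [hs0]; simp only [neg_zero, exp_zero, mul_one]
      calc p = exp (Real.log p) := (exp_log hp).symm
        _ ≤ exp α := exp_le_exp.mpr (by linarith)
    · exact (hqeq (by rw [hs]; exact lt_max_of_lt_left h)).le
  have hid : p * (exp (-t) - exp (-s)) + exp α * (t - s) =
      p * exp (-s) * (exp (s - t) - 1 - (s - t)) + (exp α - p * exp (-s)) * (t - s) := by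
    have he : exp (-t) = exp (-s) * exp (s - t) := by rw [← exp_add]; congr 1; ring
    rw [he]; ring
  have h1 : 0 ≤ exp (s - t) - 1 - (s - t) := by linarith [add_one_le_exp (s - t)]
  have h2 : 0 ≤ (exp α - p * exp (-s)) * (t - s) := by
    rcases le_or_gt s t with h | h
    · exact mul_nonneg (by linarith) (by linarith)
    · rw [hqeq (lt_of_le_of_lt ht h)]; simp
  constructor
  · rw [hid]; have := mul_nonneg hq.le h1; linarith
  · intro h0
    rw [hid] at h0
    have hterm1 : p * exp (-s) * (exp (s - t) - 1 - (s - t)) = 0 := by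
      have := mul_nonneg hq.le h1; linarith
    have h1' : exp (s - t) - 1 - (s - t) = 0 := by
      rcases mul_eq_zero.mp hterm1 with h | h
      · exact absurd h hq.ne'
      · exact h
    by_contra hne
    have : s - t ≠ 0 := fun hh => hne (by linarith)
    have := add_one_lt_exp this
    linarith

/-- Uniqueness part of Koopman's search theorem: for any feasible coverage `c`
with budget `B` and the Koopman coverage `c_opt = max (ln p - α) 0` with the
same budget, the difference of detection probabilities equals
`∫ p (e^{-c} - e^{-c_opt}) ≥ 0`, with equality iff `c = c_opt` almost
everywhere on `{p > 0}`. -/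
theorem koopman_uniqueness {S : Type*} [MeasurableSpace S]
    (μ : Measure S) [IsFiniteMeasure μ]
    (p : S → ℝ) (hp_meas : Measurable p) (hp_pos : ∀ x, 0 < p x)
    (hp_prob : ∫ x, p x ∂μ = 1)
    (B : ℝ) (hB : 0 < B) (α : ℝ)
    (c_opt : S → ℝ) (hc_opt : ∀ x, c_opt x = max (Real.log (p x) - α) 0)
    (hc_opt_int : Integrable c_opt μ) (hc_opt_budget : ∫ x, c_opt x ∂μ = B)
    (c : S → ℝ) (hc_meas : Measurable c) (hc_nonneg : ∀ x, 0 ≤ c x)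
    (hc_int : Integrable c μ) (hc_budget : ∫ x, c x ∂μ = B) :
    ((∫ x, p x * (1 - Real.exp (-c_opt x)) ∂μ) -
       ∫ x, p x * (1 - Real.exp (-c x)) ∂μ =
      ∫ x, p x * (Real.exp (-c x) - Real.exp (-c_opt x)) ∂μ) ∧
    (0 ≤ ∫ x, p x * (Real.exp (-c x) - Real.exp (-c_opt x)) ∂μ) ∧
    ((∫ x, p x * (Real.exp (-c x) - Real.exp (-c_opt x)) ∂μ) = 0 ↔
      ∀ᵐ x ∂(μ.restrict {x | 0 < p x}), c x = c_opt x) := by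
  have hco_nonneg : ∀ x, 0 ≤ c_opt x := fun x => (hc_opt x) ▸ le_max_right _ _
  have hco_meas : Measurable c_opt := by
    have : c_opt = fun x => max (Real.log (p x) - α) 0 := funext hc_opt
    rw [this]
    exact ((Real.measurable_log.comp hp_meas).sub measurable_const).max measurable_const
  have hp_int : Integrable p μ := by
    by_contra h
    rw [integral_undef h] at hp_prob
    exact one_ne_zero hp_prob.symm
  -- bound helper
  have hbound : ∀ (f g : S → ℝ), (∀ x, 0 ≤ f x) → (∀ x, 0 ≤ g x) → Measurable f → Measurable g →
      Integrable (fun x => p x * (Real.exp (-f x) - Real.exp (-g x))) μ := by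
    intro f g hf hg hfm hgm
    apply hp_int.mono
    · exact ((hp_meas.mul (((hfm.neg.exp).sub (hgm.neg.exp))))).aestronglyMeasurable
    · refine Filter.Eventually.of_forall fun x => ?_
      have h1 := Real.exp_pos (-f x)
      have h2 := Real.exp_pos (-g x)
      have h3 : Real.exp (-f x) ≤ 1 := Real.exp_le_one_iff.mpr (by linarith [hf x])
      have h4 : Real.exp (-g x) ≤ 1 := Real.exp_le_one_iff.mpr (by linarith [hg x])
      have habs : |Real.exp (-f x) - Real.exp (-g x)| ≤ 1 := abs_le.mpr ⟨by linarith, by linarith⟩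
      calc ‖p x * (Real.exp (-f x) - Real.exp (-g x))‖
          = p x * |Real.exp (-f x) - Real.exp (-g x)| := by
            rw [Real.norm_eq_abs, abs_mul, abs_of_pos (hp_pos x)]
        _ ≤ p x * 1 := mul_le_mul_of_nonneg_left habs (hp_pos x).le
        _ ≤ ‖p x‖ := by rw [Real.norm_eq_abs, abs_of_pos (hp_pos x)]; linarith
  have hg_int : Integrable (fun x => p x * (Real.exp (-c x) - Real.exp (-c_opt x))) μ :=
    hbound c c_opt hc_nonneg hco_nonneg hc_meas hco_meas
  have h1_int : Integrable (fun x => p x * (1 - Real.exp (-c_opt x))) μ := by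
    have := hbound (fun _ => 0) c_opt (fun _ => le_refl 0) hco_nonneg measurable_const hco_meas
    simpa using this
  have h2_int : Integrable (fun x => p x * (1 - Real.exp (-c x))) μ := by
    have := hbound (fun _ => 0) c (fun _ => le_refl 0) hc_nonneg measurable_const hc_meas
    simpa using this
  refine ⟨?_, ?_, ?_⟩
  · rw [← integral_sub h1_int h2_int]
    congr 1 with x; ring
  · -- F = g + exp α * (c - c_opt)
    have hF_nonneg : ∀ x, 0 ≤ p x * (Real.exp (-c x) - Real.exp (-c_opt x)) +
        Real.exp α * (c x - c_opt x) := fun x =>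
      (koopman_key α (p x) (c x) (c_opt x) (hp_pos x) (hc_nonneg x) (hc_opt x)).1
    have hint : ∫ x, (p x * (Real.exp (-c x) - Real.exp (-c_opt x)) +
        Real.exp α * (c x - c_opt x)) ∂μ =
        ∫ x, p x * (Real.exp (-c x) - Real.exp (-c_opt x)) ∂μ := by
      have hd : Integrable (fun x => Real.exp α * (c x - c_opt x)) μ := by
        have := (hc_int.sub hc_opt_int).const_mul (Real.exp α)
        simpa using this
      rw [integral_add hg_int hd, integral_const_mul,
        integral_sub hc_int hc_opt_int, hc_budget, hc_opt_budget]
      ring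
    calc (0:ℝ) ≤ ∫ x, (p x * (Real.exp (-c x) - Real.exp (-c_opt x)) +
        Real.exp α * (c x - c_opt x)) ∂μ := integral_nonneg hF_nonneg
      _ = _ := hint
  · have hset : {x | 0 < p x} = univ := eq_univ_of_forall hp_pos
    rw [hset, Measure.restrict_univ]
    have hF_int : Integrable (fun x => p x * (Real.exp (-c x) - Real.exp (-c_opt x)) +
        Real.exp α * (c x - c_opt x)) μ := hg_int.add ((hc_int.sub hc_opt_int).const_mul _)
    have hF_nonneg : ∀ x, 0 ≤ p x * (Real.exp (-c x) - Real.exp (-c_opt x)) +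
        Real.exp α * (c x - c_opt x) := fun x =>
      (koopman_key α (p x) (c x) (c_opt x) (hp_pos x) (hc_nonneg x) (hc_opt x)).1
    have hint : ∫ x, (p x * (Real.exp (-c x) - Real.exp (-c_opt x)) +
        Real.exp α * (c x - c_opt x)) ∂μ =
        ∫ x, p x * (Real.exp (-c x) - Real.exp (-c_opt x)) ∂μ := by
      have hd : Integrable (fun x => Real.exp α * (c x - c_opt x)) μ := by
        have := (hc_int.sub hc_opt_int).const_mul (Real.exp α)
        simpa using this
      rw [integral_add hg_int hd, integral_const_mul,
        integral_sub hc_int hc_opt_int, hc_budget, hc_opt_budget]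
      ring
    constructor
    · intro h0
      have hF0 : ∫ x, (p x * (Real.exp (-c x) - Real.exp (-c_opt x)) +
          Real.exp α * (c x - c_opt x)) ∂μ = 0 := by rw [hint, h0]
      have := (integral_eq_zero_iff_of_nonneg hF_nonneg hF_int).mp hF0
      filter_upwards [this] with x hx
      exact (koopman_key α (p x) (c x) (c_opt x) (hp_pos x) (hc_nonneg x) (hc_opt x)).2 hx
    · intro hae
      have : (fun x => p x * (Real.exp (-c x) - Real.exp (-c_opt x))) =ᵐ[μ] fun _ => 0 := by
        filter_upwards [hae] with x hx
        rw [hx]; ring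
      rw [integral_congr_ae this, integral_zero]
end
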